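/- For any set system D = ([n], F) and any element i ∈ [n], the composite operations + * + and * + * applied to element i give the same set system: ((D + i) * i) + i = ((D * i) + i) * i; this common involution is denoted \bar{*} i, and its feasible sets are F △ {I \ {i} : I ∈ F, i ∈ I}. -/

import Mathlib

/-!
Every set is either `Y` or `insert i Y` with `i ∉ Y`, and all three operations act on each such
pair separately. Recording the pair `(Y ∈ F, insert i Y ∈ F)` as `(a, b)`, the twist acts as
`(a, b) ↦ (b, a)`, the loop complementation as `(a, b) ↦ (a, a xor b)` and `\bar{∗} i` as
`(a, b) ↦ (a xor b, b)`; both composites send `(a, b)` to `(a xor b, b)`.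
-/

open scoped symmDiff

def twist {n : ℕ} (F : Finset (Finset (Fin n))) (i : Fin n) : Finset (Finset (Fin n)) :=
  F.image (fun X => X ∆ ({i} : Finset (Fin n)))

def loopComp {n : ℕ} (F : Finset (Finset (Fin n))) (i : Fin n) : Finset (Finset (Fin n)) :=
  F ∆ ((F.filter (fun I => i ∉ I)).image (fun I => insert i I))

/-- The operation `\bar{∗} i`, with feasible sets `F ∆ {I \ {i} : I ∈ F, i ∈ I}`. -/
def barStar {n : ℕ} (F : Finset (Finset (Fin n))) (i : Fin n) : Finset (Finset (Fin n)) :=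
  F ∆ ((F.filter (fun I => i ∈ I)).image (fun I => I.erase i))

namespace Finset

variable {α : Type*} [DecidableEq α] {i : α} {Y : Finset α} {F : Finset (Finset α)}

theorem notMem_image_insert (hi : i ∉ Y) : Y ∉ F.image (insert i) := by
  rw [mem_image]
  rintro ⟨Z, -, hZ⟩
  exact hi (hZ ▸ mem_insert_self i Z)

theorem insert_mem_image_insert_filter_iff (hi : i ∉ Y) :
    insert i Y ∈ (F.filter (i ∉ ·)).image (insert i) ↔ Y ∈ F := by
  simp only [mem_image, mem_filter]
  constructor
  · rintro ⟨Z, ⟨hZ, hiZ⟩, hZY⟩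
    rwa [← erase_insert hi, ← hZY, erase_insert hiZ]
  · exact fun hY => ⟨Y, ⟨hY, hi⟩, rfl⟩

theorem insert_notMem_image_erase : insert i Y ∉ F.image (erase · i) := by
  rw [mem_image]
  rintro ⟨Z, -, hZ⟩
  exact notMem_erase i Z (hZ ▸ mem_insert_self i Y)

theorem mem_image_erase_filter_iff (hi : i ∉ Y) :
    Y ∈ (F.filter (i ∈ ·)).image (erase · i) ↔ insert i Y ∈ F := by
  simp only [mem_image, mem_filter]
  constructor
  · rintro ⟨Z, ⟨hZ, hiZ⟩, rfl⟩
    rwa [insert_erase hiZ]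
  · exact fun hY => ⟨insert i Y, ⟨hY, mem_insert_self i Y⟩, erase_insert hi⟩

theorem ext_insert {G H : Finset (Finset α)} (i : α)
    (h : ∀ Y, i ∉ Y → (Y ∈ G ↔ Y ∈ H) ∧ (insert i Y ∈ G ↔ insert i Y ∈ H)) : G = H := by
  ext X
  by_cases hi : i ∈ X
  · rw [← insert_erase hi]
    exact (h _ (notMem_erase i X)).2
  · exact (h X hi).1

theorem symmDiff_singleton_of_notMem (hi : i ∉ Y) : Y ∆ {i} = insert i Y := by
  rw [symmDiff_eq_union (disjoint_singleton_right.mpr hi), insert_eq, union_comm]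

end Finset

section

variable {n : ℕ} {F : Finset (Finset (Fin n))} {i : Fin n} {Y : Finset (Fin n)}

theorem mem_twist {X : Finset (Fin n)} : X ∈ twist F i ↔ X ∆ {i} ∈ F := by
  simp only [twist, Finset.mem_image]
  constructor
  · rintro ⟨Z, hZ, rfl⟩
    rwa [symmDiff_symmDiff_cancel_right]
  · exact fun h => ⟨X ∆ {i}, h, symmDiff_symmDiff_cancel_right _ _⟩

theorem mem_twist_of_notMem (hi : i ∉ Y) : Y ∈ twist F i ↔ insert i Y ∈ F := by
  rw [mem_twist, Finset.symmDiff_singleton_of_notMem hi]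

theorem insert_mem_twist (hi : i ∉ Y) : insert i Y ∈ twist F i ↔ Y ∈ F := by
  rw [mem_twist, ← Finset.symmDiff_singleton_of_notMem hi, symmDiff_symmDiff_cancel_right]

theorem mem_loopComp_of_notMem (hi : i ∉ Y) : Y ∈ loopComp F i ↔ Y ∈ F := by
  simp only [loopComp, Finset.mem_symmDiff, Finset.notMem_image_insert hi]
  tauto

theorem insert_mem_loopComp (hi : i ∉ Y) :
    insert i Y ∈ loopComp F i ↔ ¬(insert i Y ∈ F ↔ Y ∈ F) := by
  simp only [loopComp, Finset.mem_symmDiff, Finset.insert_mem_image_insert_filter_iff hi]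
  tauto

theorem mem_barStar_of_notMem (hi : i ∉ Y) :
    Y ∈ barStar F i ↔ ¬(Y ∈ F ↔ insert i Y ∈ F) := by
  simp only [barStar, Finset.mem_symmDiff, Finset.mem_image_erase_filter_iff hi]
  tauto

theorem insert_mem_barStar : insert i Y ∈ barStar F i ↔ insert i Y ∈ F := by
  simp only [barStar, Finset.mem_symmDiff, Finset.insert_notMem_image_erase]
  tauto

end

/-- `+∗+ = ∗+∗` on a single element, and this common operation equals `\bar{∗} i`. -/
theorem barStar_eq {n : ℕ} (F : Finset (Finset (Fin n))) (i : Fin n) :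
    loopComp (twist (loopComp F i) i) i = twist (loopComp (twist F i) i) i ∧
      loopComp (twist (loopComp F i) i) i = barStar F i := by
  constructor <;> refine Finset.ext_insert i fun Y hi => ?_ <;>
    simp only [mem_twist_of_notMem hi, insert_mem_twist hi, mem_loopComp_of_notMem hi,
      insert_mem_loopComp hi, mem_barStar_of_notMem hi, insert_mem_barStar] <;>
    tauto
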